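/- arXiv:q-alg/9706023 — 2 statements merged into one kernel-verified Lean document; each statement's English description precedes it below -/
import Mathlib

section
/- Let p, q ∈ ℂ with 0 < |p| < 1 and q ≠ 0, and let L = {pᵐ qⁿ : m, n ∈ ℤ}. Then for every x ∈ ℂ, x ≠ 0, with x ∉ L, the S-matrix function of the deformed Virasoro algebra factorizes as S_TT(x) = f(x)⁻¹ · f(x⁻¹). (This is the Riemann factorization used to derive the quadratic relation (7) on the Fourier coefficients of the deformed Virasoro current.) -/
/-- The infinite product `(a; b)_∞ = ∏_{n ≥ 0} (1 - a bⁿ)`. -/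
noncomputable def qPoch (a b : ℂ) : ℂ := ∏' n : ℕ, (1 - a * b ^ n)

/-- The structure function `f(x)` of the deformed Virasoro algebra (formula (6)):
`f(x) = (1-x)⁻¹ (xq; p²)_∞ (xpq⁻¹; p²)_∞ / ((xpq; p²)_∞ (xp²q⁻¹; p²)_∞)`. -/
noncomputable def fDV (p q x : ℂ) : ℂ :=
  (1 - x)⁻¹ * (qPoch (x * q) (p ^ 2) * qPoch (x * p * q⁻¹) (p ^ 2)) /
    (qPoch (x * p * q) (p ^ 2) * qPoch (x * p ^ 2 * q⁻¹) (p ^ 2))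

/-- `θ_a(x) = ∏_{n ≥ 1} (1 - x a^{n-1})(1 - x⁻¹ aⁿ)(1 - aⁿ)`. -/
noncomputable def theta (a x : ℂ) : ℂ :=
  ∏' n : ℕ, ((1 - x * a ^ n) * (1 - x⁻¹ * a ^ (n + 1)) * (1 - a ^ (n + 1)))

/-- The S-matrix function of the deformed Virasoro algebra:
`S_TT(x) = θ_{p²}(xp) θ_{p²}(xq⁻¹) θ_{p²}(xp⁻¹q) / (θ_{p²}(xp⁻¹) θ_{p²}(xq) θ_{p²}(xpq⁻¹))`. -/
noncomputable def STT (p q x : ℂ) : ℂ :=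
  theta (p ^ 2) (x * p) * theta (p ^ 2) (x * q⁻¹) * theta (p ^ 2) (x * p⁻¹ * q) /
    (theta (p ^ 2) (x * p⁻¹) * theta (p ^ 2) (x * q) * theta (p ^ 2) (x * p * q⁻¹))

/-! `θ_a(y) = (y; a)_∞ (a/y; a)_∞ (a; a)_∞`, so both sides of the factorization are ratios of
Pochhammer symbols `(c; p²)_∞` with `c = x^{±1} pᵐ qⁿ`. Six applications of the shift
`(c; p²)_∞ = (1 - c) (cp²; p²)_∞` leave the same symbols on both sides, and what remains is an
identity of rational functions in `x, p, q`. Off the lattice `L` the symbols that have to be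
cancelled do not vanish, because none of their factors `1 - c p²ⁿ` does. -/

section qPoch

variable {a b c : ℂ}

lemma summable_norm_mul_pow (hb : ‖b‖ < 1) : Summable fun n : ℕ => ‖c * b ^ n‖ := by
  simpa only [norm_mul, norm_pow] using
    (summable_geometric_of_lt_one (norm_nonneg b) hb).mul_left ‖c‖

lemma multipliable_one_sub_mul_pow (hb : ‖b‖ < 1) :
    Multipliable fun n : ℕ => 1 - c * b ^ n := by
  simpa only [sub_eq_add_neg] using
    multipliable_one_add_of_summable (by simpa only [norm_neg] using summable_norm_mul_pow hb)

lemma qPoch_ne_zero (hb : ‖b‖ < 1) (h : ∀ n : ℕ, c * b ^ n ≠ 1) : qPoch c b ≠ 0 := by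
  simpa only [qPoch, sub_eq_add_neg] using tprod_one_add_ne_zero_of_summable
    (fun n => by simpa only [← sub_eq_add_neg, sub_ne_zero] using (h n).symm)
    (by simpa only [norm_neg] using summable_norm_mul_pow hb)

lemma qPoch_ne_zero_of_norm_lt_one (hc : ‖c‖ < 1) (hb : ‖b‖ < 1) : qPoch c b ≠ 0 :=
  qPoch_ne_zero hb fun n h => by
    have : ‖c * b ^ n‖ ≤ ‖c‖ := by
      rw [norm_mul, norm_pow]
      exact mul_le_of_le_one_right (norm_nonneg c) (pow_le_one₀ (norm_nonneg b) hb.le)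
    rw [h, norm_one] at this
    exact this.not_gt hc

lemma qPoch_eq_one_sub_mul_qPoch (hb : ‖b‖ < 1) (c : ℂ) :
    qPoch c b = (1 - c) * qPoch (c * b) b := by
  have h : Multipliable fun n : ℕ => 1 - c * b ^ (n + 1) := by
    simpa only [pow_succ', mul_assoc] using multipliable_one_sub_mul_pow (c := c * b) hb
  rw [qPoch, tprod_eq_zero_mul' (f := fun n => 1 - c * b ^ n) h, pow_zero, mul_one, qPoch]
  exact congrArg _ (tprod_congr fun n => by ring)

lemma theta_eq_qPoch (ha : ‖a‖ < 1) (y : ℂ) :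
    theta a y = qPoch y a * qPoch (y⁻¹ * a) a * qPoch a a := by
  have h := multipliable_one_sub_mul_pow (c := y) ha
  have h' := multipliable_one_sub_mul_pow (c := y⁻¹ * a) ha
  rw [qPoch, qPoch, qPoch, ← h.tprod_mul h',
    ← (h.mul h').tprod_mul (multipliable_one_sub_mul_pow ha)]
  exact tprod_congr fun n => by ring

end qPoch

/-- The lattice `L = {pᵐ qⁿ : m, n ∈ ℤ}`. -/
def pqLattice (p q : ℂ) : Set ℂ := {y | ∃ m n : ℤ, y = p ^ m * q ^ n}

section pqLattice

variable {p q y z : ℂ}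

lemma one_mem_pqLattice : (1 : ℂ) ∈ pqLattice p q := ⟨0, 0, by simp⟩

@[simp] lemma left_mem_pqLattice : p ∈ pqLattice p q := ⟨1, 0, by simp⟩

@[simp] lemma right_mem_pqLattice : q ∈ pqLattice p q := ⟨0, 1, by simp⟩

@[simp] lemma inv_mem_pqLattice_iff : y⁻¹ ∈ pqLattice p q ↔ y ∈ pqLattice p q := by
  suffices ∀ y, y ∈ pqLattice p q → y⁻¹ ∈ pqLattice p q from ⟨fun h => inv_inv y ▸ this _ h, this y⟩
  rintro _ ⟨m, n, rfl⟩
  exact ⟨-m, -n, by rw [mul_inv, zpow_neg, zpow_neg]⟩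

@[simp] lemma pow_mem_pqLattice (hy : y ∈ pqLattice p q) (k : ℕ) : y ^ k ∈ pqLattice p q := by
  obtain ⟨m, n, rfl⟩ := hy
  exact ⟨m * k, n * k, by rw [mul_pow, zpow_mul, zpow_mul, zpow_natCast, zpow_natCast]⟩

lemma mul_mem_pqLattice (hp : p ≠ 0) (hq : q ≠ 0) (hy : y ∈ pqLattice p q)
    (hz : z ∈ pqLattice p q) : y * z ∈ pqLattice p q := by
  obtain ⟨m, n, rfl⟩ := hy
  obtain ⟨m', n', rfl⟩ := hz
  exact ⟨m + m', n + n', by rw [zpow_add₀ hp, zpow_add₀ hq]; ring⟩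

lemma ne_zero_of_mem_pqLattice (hp : p ≠ 0) (hq : q ≠ 0) (hy : y ∈ pqLattice p q) : y ≠ 0 := by
  obtain ⟨m, n, rfl⟩ := hy
  exact mul_ne_zero (zpow_ne_zero m hp) (zpow_ne_zero n hq)

@[simp] lemma mul_mem_pqLattice_cancel_right (hp : p ≠ 0) (hq : q ≠ 0) (hz : z ∈ pqLattice p q) :
    y * z ∈ pqLattice p q ↔ y ∈ pqLattice p q := by
  refine ⟨fun h => ?_, fun h => mul_mem_pqLattice hp hq h hz⟩
  have := mul_mem_pqLattice hp hq h (inv_mem_pqLattice_iff.mpr hz)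
  rwa [mul_assoc, mul_inv_cancel₀ (ne_zero_of_mem_pqLattice hp hq hz), mul_one] at this

@[simp] lemma mul_mem_pqLattice_cancel_left (hp : p ≠ 0) (hq : q ≠ 0) (hy : y ∈ pqLattice p q) :
    y * z ∈ pqLattice p q ↔ z ∈ pqLattice p q := by
  rw [mul_comm, mul_mem_pqLattice_cancel_right hp hq hy]

lemma qPoch_ne_zero_of_not_mem_pqLattice (hp : p ≠ 0) (hq : q ≠ 0) {b c : ℂ} (hb : ‖b‖ < 1)
    (hbL : b ∈ pqLattice p q) (hc : c ∉ pqLattice p q) : qPoch c b ≠ 0 :=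
  qPoch_ne_zero hb fun n h => hc <| by
    rw [← mul_mem_pqLattice_cancel_right hp hq (pow_mem_pqLattice hbL n), h]
    exact one_mem_pqLattice

end pqLattice

/-- Riemann factorization of the S-matrix function of the deformed Virasoro algebra:
for `x ∉ L = pᶻqᶻ`, `S_TT(x) = f(x)⁻¹ · f(x⁻¹)`. -/
theorem STT_riemann_factorization
    (p q x : ℂ) (hp0 : 0 < ‖p‖) (hp1 : ‖p‖ < 1) (hq : q ≠ 0)
    (hx : x ≠ 0) (hxL : ¬ ∃ m n : ℤ, x = p ^ m * q ^ n) :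
    STT p q x = (fDV p q x)⁻¹ * fDV p q x⁻¹ := by
  have hp : p ≠ 0 := norm_pos_iff.mp hp0
  have hb : ‖p ^ 2‖ < 1 := by rw [norm_pow]; exact pow_lt_one₀ (norm_nonneg p) hp1 two_ne_zero
  have hxL : x ∉ pqLattice p q := hxL
  have hx1 : x - 1 ≠ 0 := sub_ne_zero.mpr fun h => hxL (h ▸ one_mem_pqLattice)
  have hpx : p - x ≠ 0 := sub_ne_zero.mpr fun h => hxL (h ▸ left_mem_pqLattice)
  have hK : qPoch (p ^ 2) (p ^ 2) ≠ 0 := qPoch_ne_zero_of_norm_lt_one hb hb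
  have hxp : qPoch (x * p) (p ^ 2) ≠ 0 :=
    qPoch_ne_zero_of_not_mem_pqLattice hp hq hb (by simp) (by simp [hp, hq, hxL])
  have hp3x : qPoch (p ^ 3 / x) (p ^ 2) ≠ 0 :=
    qPoch_ne_zero_of_not_mem_pqLattice hp hq hb (by simp) (by simp [div_eq_mul_inv, hp, hq, hxL])
  simp only [STT, fDV, theta_eq_qPoch hb]
  -- `field_simp` brings the arguments of the symbols to the forms `x / p`, `p / x`, … used below.
  field_simp
  rw [qPoch_eq_one_sub_mul_qPoch hb (x / p), qPoch_eq_one_sub_mul_qPoch hb (p / x),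
    qPoch_eq_one_sub_mul_qPoch hb (x / q), qPoch_eq_one_sub_mul_qPoch hb (q / x),
    qPoch_eq_one_sub_mul_qPoch hb (x * q / p), qPoch_eq_one_sub_mul_qPoch hb (p / (x * q))]
  field_simp
  ring
end

section
/- Let a ∈ ℂ with 0 < |a| < 1, and let x ∈ ℂ with x ≠ 0. Then the convergent infinite product θ_a(x) = ∏_{n≥1} (1 − x a^{n−1})(1 − x⁻¹ aⁿ)(1 − aⁿ) vanishes if and only if x = aᵐ for some integer m ∈ ℤ. -/
theorem tprod_eq_zero_iff_of_summable_norm_sub_one {ι R : Type*} [NormedCommRing R]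
    [NormOneClass R] [CompleteSpace R] [NormMulClass R] {f : ι → R}
    (hf : Summable fun i ↦ ‖f i - 1‖) : ∏' i, f i = 0 ↔ ∃ i, f i = 0 := by
  refine ⟨fun h ↦ ?_, tprod_of_exists_eq_zero⟩
  by_contra! hne
  refine tprod_one_add_ne_zero_of_summable (f := (f · - 1)) (by simpa using hne) hf ?_
  simpa using h

theorem Int.exists_iff_exists_nat_neg_or_add_one {P : ℤ → Prop} :
    (∃ m : ℤ, P m) ↔ ∃ n : ℕ, P (-n) ∨ P (n + 1) := by
  refine ⟨fun ⟨m, hm⟩ ↦ ?_, fun ⟨n, hn⟩ ↦ hn.elim (⟨_, ·⟩) (⟨_, ·⟩)⟩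
  rcases le_or_gt m 0 with hm0 | hm0
  · exact ⟨(-m).toNat, .inl (by rwa [Int.toNat_of_nonneg (by omega), neg_neg])⟩
  · exact ⟨(m - 1).toNat, .inr (by rwa [Int.toNat_of_nonneg (by omega), sub_add_cancel])⟩

section

variable (a x : ℂ)

noncomputable def thetaFactor (n : ℕ) : ℂ :=
  (1 - x * a ^ n) * (1 - x⁻¹ * a ^ (n + 1)) * (1 - a ^ (n + 1))

theorem theta_eq_tprod_thetaFactor : theta a x = ∏' n, thetaFactor a x n := rfl

theorem thetaFactor_sub_one (n : ℕ) :
    thetaFactor a x n - 1 = -(x + x⁻¹ * a + a) * a ^ n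
      + (x * x⁻¹ * a + x * a + x⁻¹ * a ^ 2) * (a ^ 2) ^ n - x * x⁻¹ * a ^ 2 * (a ^ 3) ^ n := by
  rw [thetaFactor]
  ring

variable {a x}

theorem norm_pow_lt_one_of_norm_lt_one (ha : ‖a‖ < 1) {k : ℕ} (hk : k ≠ 0) : ‖a ^ k‖ < 1 := by
  rwa [norm_pow, pow_lt_one_iff_of_nonneg (norm_nonneg a) hk]

theorem summable_norm_thetaFactor_sub_one (ha : ‖a‖ < 1) :
    Summable fun n ↦ ‖thetaFactor a x n - 1‖ := by
  have geom (k : ℕ) (hk : k ≠ 0) : Summable fun n ↦ (a ^ k) ^ n :=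
    summable_geometric_of_norm_lt_one (norm_pow_lt_one_of_norm_lt_one ha hk)
  refine summable_norm_iff.mpr ?_
  simp only [thetaFactor_sub_one]
  simpa using ((((geom 1 one_ne_zero).mul_left _).add ((geom 2 two_ne_zero).mul_left _)).sub
    ((geom 3 three_ne_zero).mul_left _))

theorem thetaFactor_eq_zero_iff (ha : ‖a‖ < 1) (hx : x ≠ 0) (n : ℕ) :
    thetaFactor a x n = 0 ↔ x = a ^ (-(n : ℤ)) ∨ x = a ^ ((n : ℤ) + 1) := by
  have hpow : 1 - a ^ (n + 1) ≠ 0 := by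
    refine sub_ne_zero.mpr fun h ↦ ?_
    simpa [← h] using norm_pow_lt_one_of_norm_lt_one ha n.succ_ne_zero
  rw [thetaFactor, mul_eq_zero, or_iff_left hpow, mul_eq_zero, sub_eq_zero, sub_eq_zero, eq_comm,
    mul_eq_one_iff_inv_eq₀ hx, eq_comm (a := (1 : ℂ)), inv_mul_eq_one₀ hx, inv_eq_iff_eq_inv,
    zpow_neg, zpow_natCast, ← Nat.cast_succ, zpow_natCast]

end

theorem theta_eq_zero_iff_general (a x : ℂ) (ha1 : ‖a‖ < 1)
    (hx : x ≠ 0) :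
    theta a x = 0 ↔ ∃ m : ℤ, x = a ^ m := by
  rw [theta_eq_tprod_thetaFactor, tprod_eq_zero_iff_of_summable_norm_sub_one
    (summable_norm_thetaFactor_sub_one ha1), Int.exists_iff_exists_nat_neg_or_add_one]
  simp only [thetaFactor_eq_zero_iff ha1 hx]

/-- For `0 < |a| < 1` and `x ≠ 0`, the theta product `θ_a(x)` vanishes if and only if
`x = aᵐ` for some integer `m`. -/
theorem theta_eq_zero_iff (a x : ℂ) (ha0 : 0 < ‖a‖) (ha1 : ‖a‖ < 1)
    (hx : x ≠ 0) :
    theta a x = 0 ↔ ∃ m : ℤ, x = a ^ m :=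
  theta_eq_zero_iff_general a x ha1 hx
end
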